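/- arXiv:0911.2026 — 5 statements merged into one kernel-verified Lean document; each statement's English description precedes it below -/
import Mathlib

section
/- Let k be a field, G a simple undirected graph on vertex set {1,…,n} with edge set E_G, and t ≥ 1 a natural number. Then in R = k[x_1,…,x_n] the ideal ⋂_{{i,j}∈E_G} ⟨x_i, x_j⟩^t equals the ideal generated by all monomials x^a where a = (a_1,…,a_n) is a t-vertex cover of G, i.e. a_i + a_j ≥ t for every edge {i,j} ∈ E_G. -/
open MvPolynomial

private def coverIdeal {k : Type*} [Field k] {n : ℕ} (i j : Fin n) (t : ℕ) :
    Ideal (MvPolynomial (Fin n) k) where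
  carrier := {f | ∀ d ∈ f.support, t ≤ d i + d j}
  zero_mem' := by simp
  add_mem' := by
    intro f g hf hg d hd
    rcases Finset.mem_union.1 (MvPolynomial.support_add hd) with h | h
    · exact hf d h
    · exact hg d h
  smul_mem' := by
    intro c f hf d hd
    rw [smul_eq_mul] at hd
    classical
    obtain ⟨a, ha, b, hb, rfl⟩ := Finset.mem_add.1 (MvPolynomial.support_mul _ _ hd)
    have := hf b hb
    simp only [Finsupp.add_apply]
    omega

private lemma span_pair_pow_le {k : Type*} [Field k] {n : ℕ} (i j : Fin n) (t : ℕ) :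
    (Ideal.span {X i, X j} : Ideal (MvPolynomial (Fin n) k)) ^ t ≤ coverIdeal i j t := by
  induction t with
  | zero => exact fun f _ d _ => Nat.zero_le _
  | succ t ih =>
    rw [pow_succ]
    refine Ideal.mul_le.2 fun r hr s hs => ?_
    have hr' : r ∈ coverIdeal (k := k) i j t := ih hr
    have hs' : s ∈ coverIdeal (k := k) i j 1 := by
      refine Ideal.span_le.2 ?_ hs
      rintro x (rfl | rfl) <;> intro d hd <;>
        simp only [MvPolynomial.support_X, Finset.mem_singleton] at hd <;>
        subst hd <;> simp
    intro d hd
    classical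
    obtain ⟨a, ha, b, hb, rfl⟩ := Finset.mem_add.1 (MvPolynomial.support_mul _ _ hd)
    have h1 := hr' a ha
    have h2 := hs' b hb
    simp only [Finsupp.add_apply]
    omega

/-- For a simple graph `G` on `{1,…,n}` and `t ≥ 1`, the ideal
`⋂_{{i,j} ∈ E_G} ⟨x_i, x_j⟩^t` equals the ideal generated by the monomials `x^a`
where `a` is a `t`-vertex cover of `G`, i.e. `a_i + a_j ≥ t` for every edge `{i,j}`. -/
theorem inter_pow_span_pair_eq_span_t_covers (k : Type*) [Field k] (n t : ℕ) (ht : 1 ≤ t)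
    (G : SimpleGraph (Fin n)) :
    (⨅ (i : Fin n) (j : Fin n) (_ : G.Adj i j),
        (Ideal.span {X i, X j} : Ideal (MvPolynomial (Fin n) k)) ^ t) =
    Ideal.span {f : MvPolynomial (Fin n) k |
      ∃ a : Fin n → ℕ, (∀ i j, G.Adj i j → t ≤ a i + a j) ∧ f = ∏ l, X l ^ a l} := by
  apply le_antisymm
  · intro f hf
    simp only [Ideal.mem_iInf] at hf
    have hcov : ∀ d ∈ f.support, ∀ i j, G.Adj i j → t ≤ d i + d j := by
      intro d hd i j hij
      exact span_pair_pow_le i j t (hf i j hij) d hd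
    rw [← f.support_sum_monomial_coeff]
    refine Ideal.sum_mem _ fun d hd => ?_
    have h1 : (monomial d (1 : k)) = ∏ l, X l ^ d l := by
      rw [monomial_eq, C_1, one_mul, Finsupp.prod_pow]
    have h2 : (monomial d (coeff d f)) = C (coeff d f) * monomial d 1 := by
      rw [C_mul_monomial, mul_one]
    rw [h2]
    exact Ideal.mul_mem_left _ _ (Ideal.subset_span ⟨d, fun i j hij => hcov d hd i j hij, h1⟩)
  · refine le_iInf fun i => le_iInf fun j => le_iInf fun hij => ?_
    rw [Ideal.span_le]
    rintro f ⟨a, hc, rfl⟩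
    have hne : i ≠ j := hij.ne
    have h4 : (X i ^ a i * X j ^ a j : MvPolynomial (Fin n) k) ∣ ∏ l, X l ^ a l := by
      have hp : ∏ l ∈ ({i, j} : Finset (Fin n)), X l ^ a l
          = (X i ^ a i * X j ^ a j : MvPolynomial (Fin n) k) :=
        Finset.prod_pair hne
      rw [← hp]
      exact Finset.prod_dvd_prod_of_subset _ _ _ (Finset.subset_univ _)
    have hXi : X i ∈ (Ideal.span {X i, X j} : Ideal (MvPolynomial (Fin n) k)) :=
      Ideal.subset_span (Or.inl rfl)
    have hXj : X j ∈ (Ideal.span {X i, X j} : Ideal (MvPolynomial (Fin n) k)) :=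
      Ideal.subset_span (Or.inr rfl)
    have h2 : X i ^ a i * X j ^ a j ∈
        (Ideal.span {X i, X j} : Ideal (MvPolynomial (Fin n) k)) ^ (a i + a j) := by
      rw [pow_add]
      exact Ideal.mul_mem_mul (Ideal.pow_mem_pow hXi _) (Ideal.pow_mem_pow hXj _)
    have h3 := Ideal.pow_le_pow_right (I := (Ideal.span {X i, X j} :
        Ideal (MvPolynomial (Fin n) k))) (hc i j hij)
    obtain ⟨c, hc'⟩ := h4
    rw [SetLike.mem_coe, hc']
    exact Ideal.mul_mem_right _ _ (h3 h2)
end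

section
/- Let k be a field, n ≥ 3, and let t = 2m+1 be odd with m ∈ ℕ. Then K_n^(t) = ⋂_{1≤i<j≤n} ⟨x_i, x_j⟩^t equals the ideal of k[x_1,…,x_n] generated by the monomials x_j^{m-k} ∏_{i≠j} x_i^{m+1+k} for 0 ≤ k ≤ m and 1 ≤ j ≤ n. -/
/-!
Both sides are monomial ideals. A monomial `x^d` lies in `⟨x_i, x_j⟩^t` exactly when
`d i + d j ≥ t`, so it lies in `K_n^(t)` exactly when any two of its exponents sum to at least
`2m+1`. If `j` is a variable of least exponent, this says `d l ≥ 2m+1 - d j` for all `l ≠ j`,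
i.e. `x^d` is divisible by the generator with apex `j` and `c = m - min (d j) m`; conversely every
generator has all pairwise exponent sums at least `2m+1`.
-/

open MvPolynomial

namespace MvPolynomial

variable {σ R : Type*} [CommSemiring R]

open scoped Pointwise in
theorem span_monomial_image_mul (A B : Set (σ →₀ ℕ)) :
    Ideal.span ((monomial · (1 : R)) '' A) * Ideal.span ((monomial · (1 : R)) '' B) =
      Ideal.span ((monomial · (1 : R)) '' (A + B)) := by
  rw [Ideal.span_mul_span', ← Set.image2_mul, Set.image2_image_left, Set.image2_image_right,
    ← Set.image2_add, Set.image_image2]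
  simp only [monomial_mul, one_mul]

theorem span_X_pair_pow_le (i j : σ) (t : ℕ) :
    (Ideal.span {X i, X j} : Ideal (MvPolynomial σ R)) ^ t ≤
      Ideal.span ((monomial · (1 : R)) '' {d | t ≤ d i + d j}) := by
  induction t with
  | zero =>
    rw [pow_zero, Ideal.one_eq_top, top_le_iff, Ideal.eq_top_iff_one, one_def]
    exact Ideal.subset_span ⟨0, by simp, rfl⟩
  | succ t ih =>
    have hbase : (Ideal.span {X i, X j} : Ideal (MvPolynomial σ R)) ≤
        Ideal.span ((monomial · (1 : R)) '' {d | 1 ≤ d i + d j}) := by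
      rw [Ideal.span_le, Set.insert_subset_iff, Set.singleton_subset_iff]
      exact ⟨Ideal.subset_span ⟨Finsupp.single i 1, by simp, rfl⟩,
        Ideal.subset_span ⟨Finsupp.single j 1, by simp, rfl⟩⟩
    rw [pow_succ]
    refine (Ideal.mul_mono ih hbase).trans ?_
    rw [span_monomial_image_mul]
    refine Ideal.span_mono (Set.image_mono ?_)
    rintro _ ⟨a, ha, b, hb, rfl⟩
    simp only [Set.mem_ofPred_eq, Finsupp.add_apply] at ha hb ⊢
    omega

theorem X_pow_mul_X_pow_mem_span_X_pair_pow (i j : σ) (a b : ℕ) :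
    (X i ^ a * X j ^ b : MvPolynomial σ R) ∈ (Ideal.span {X i, X j}) ^ (a + b) := by
  rw [pow_add]
  exact Ideal.mul_mem_mul (Ideal.pow_mem_pow (Ideal.subset_span (by simp)) a)
    (Ideal.pow_mem_pow (Ideal.subset_span (by simp)) b)

theorem span_X_pair_pow {i j : σ} (hij : i ≠ j) (t : ℕ) :
    (Ideal.span {X i, X j} : Ideal (MvPolynomial σ R)) ^ t =
      Ideal.span ((monomial · (1 : R)) '' {d | t ≤ d i + d j}) := by
  classical
  refine (span_X_pair_pow_le i j t).antisymm ?_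
  rw [Ideal.span_le]
  rintro _ ⟨d, hd, rfl⟩
  have hdvd : (X i ^ d i * X j ^ d j : MvPolynomial σ R) ∣ monomial d 1 := by
    rw [X_pow_eq_monomial, X_pow_eq_monomial, monomial_mul, one_mul, monomial_dvd_monomial]
    refine ⟨Or.inr fun l => ?_, dvd_rfl⟩
    by_cases hl : l = i <;> by_cases hl' : l = j <;> simp_all [Finsupp.single_apply, eq_comm]
  exact Ideal.mem_of_dvd _ hdvd (Ideal.pow_le_pow_right hd (X_pow_mul_X_pow_mem_span_X_pair_pow ..))

theorem mem_span_X_pair_pow_iff {i j : σ} (hij : i ≠ j) {t : ℕ} {f : MvPolynomial σ R} :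
    f ∈ (Ideal.span {X i, X j}) ^ t ↔ ∀ d ∈ f.support, t ≤ d i + d j := by
  rw [span_X_pair_pow hij, mem_ideal_span_monomial_image]
  exact forall₂_congr fun d _ =>
    ⟨fun ⟨_, he, hle⟩ => he.trans (add_le_add (hle i) (hle j)), fun h => ⟨d, h, le_rfl⟩⟩

theorem mem_iInf_span_X_pair_pow_iff [LinearOrder σ] {t : ℕ} {f : MvPolynomial σ R} :
    f ∈ ⨅ (i : σ) (j : σ) (_ : i < j), (Ideal.span {X i, X j}) ^ t ↔
      ∀ d ∈ f.support, Pairwise fun i j => t ≤ d i + d j := by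
  have (d : σ →₀ ℕ) : Std.Symm fun i j => t ≤ d i + d j := ⟨fun i j h => by omega⟩
  simp only [Submodule.mem_iInf, pairwise_iff_lt]
  exact ⟨fun h d hd i j hij => (mem_span_X_pair_pow_iff hij.ne).mp (h i j hij) d hd,
    fun h i j hij => (mem_span_X_pair_pow_iff hij.ne).mpr fun d hd => h d hd hij⟩

section apex

variable [Fintype σ] [DecidableEq σ]

noncomputable def apexExponent (j : σ) (a b : ℕ) : σ →₀ ℕ :=
  Finsupp.equivFunOnFinite.symm fun i => if i = j then a else b

@[simp]
theorem apexExponent_apply (j i : σ) (a b : ℕ) :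
    apexExponent j a b i = if i = j then a else b := rfl

theorem X_pow_mul_prod_erase_X_pow (j : σ) (a b : ℕ) :
    X j ^ a * ∏ i ∈ Finset.univ.erase j, X i ^ b =
      monomial (apexExponent j a b) (1 : R) := by
  rw [monomial_eq, C_1, one_mul, Finsupp.prod_fintype _ _ (fun _ => pow_zero _),
    ← Finset.mul_prod_erase _ _ (Finset.mem_univ j)]
  congr 1
  · simp
  · refine Finset.prod_congr rfl fun i hi => ?_
    rw [apexExponent_apply, if_neg (Finset.ne_of_mem_erase hi)]

theorem pairwise_le_add_iff_exists_apexExponent_le [Nonempty σ] (m : ℕ) (d : σ →₀ ℕ) :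
    (Pairwise fun i j => 2 * m + 1 ≤ d i + d j) ↔
      ∃ c ≤ m, ∃ j, apexExponent j (m - c) (m + 1 + c) ≤ d := by
  constructor
  · intro hd
    obtain ⟨j, -, hj⟩ := Finset.exists_min_image Finset.univ d Finset.univ_nonempty
    refine ⟨m - min (d j) m, Nat.sub_le _ _, j, fun l => ?_⟩
    rw [apexExponent_apply]
    split_ifs with hl
    · subst hl; omega
    · have := hd hl
      have := hj l (Finset.mem_univ l)
      omega
  · rintro ⟨c, hc, j, hle⟩ i i' hii'
    have hi := hle i
    have hi' := hle i'
    simp only [apexExponent_apply] at hi hi'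
    split_ifs at hi hi' with h h' h'
    · exact absurd (h.trans h'.symm) hii'
    all_goals omega

end apex

end MvPolynomial

/-- For `n ≥ 3` and odd `t = 2m+1`, the ideal
`K_n^(t) = ⋂_{i<j} ⟨x_i, x_j⟩^t` of `k[x_1,…,x_n]` equals the ideal generated by the
monomials `x_j^{m-k} ∏_{i≠j} x_i^{m+1+k}` for `0 ≤ k ≤ m` and `j ∈ {1,…,n}`. -/
theorem complete_graph_odd_power_generators (k : Type*) [Field k] (n m : ℕ) (hn : 3 ≤ n) :
    (⨅ (i : Fin n) (j : Fin n) (_ : i < j),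
        (Ideal.span {X i, X j} : Ideal (MvPolynomial (Fin n) k)) ^ (2 * m + 1)) =
    Ideal.span {f : MvPolynomial (Fin n) k |
      ∃ (c : ℕ) (j : Fin n), c ≤ m ∧
        f = X j ^ (m - c) * ∏ i ∈ Finset.univ.erase j, X i ^ (m + 1 + c)} := by
  have : Nonempty (Fin n) := ⟨⟨0, by omega⟩⟩
  have hgens : {f : MvPolynomial (Fin n) k | ∃ (c : ℕ) (j : Fin n), c ≤ m ∧
        f = X j ^ (m - c) * ∏ i ∈ Finset.univ.erase j, X i ^ (m + 1 + c)} =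
      (monomial · 1) ''
        {e | ∃ (c : ℕ) (j : Fin n), c ≤ m ∧ e = apexExponent j (m - c) (m + 1 + c)} := by
    ext f
    simp [X_pow_mul_prod_erase_X_pow, eq_comm]
  ext f
  rw [mem_iInf_span_X_pair_pow_iff, hgens, mem_ideal_span_monomial_image]
  refine forall₂_congr fun d _ => ?_
  rw [pairwise_le_add_iff_exists_apexExponent_le]
  exact ⟨fun ⟨c, hc, j, h⟩ => ⟨_, ⟨c, j, hc, rfl⟩, h⟩,
    fun ⟨_, ⟨c, j, hc, he⟩, h⟩ => ⟨c, hc, j, he ▸ h⟩⟩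
end

section
/- Let k be a field, n ≥ 3, and let t = 2m be even with m ≥ 1. Then K_n^(t) = ⋂_{1≤i<j≤n} ⟨x_i, x_j⟩^t equals the ideal of k[x_1,…,x_n] generated by the monomial ∏_{i=1}^n x_i^m together with the monomials x_j^{m-k} ∏_{i≠j} x_i^{m+k} for 1 ≤ k ≤ m and 1 ≤ j ≤ n. -/
open MvPolynomial

section aux
variable {k : Type*} [Field k] {n : ℕ}

lemma aux_prod_X_pow (g : Fin n → ℕ) :
    (∏ i, (X i : MvPolynomial (Fin n) k) ^ g i) =
      monomial (Finsupp.equivFunOnFinite.symm g) 1 := by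
  simp_rw [X_pow_eq_monomial]
  rw [← monomial_sum_one]
  have h : (∑ i : Fin n, Finsupp.single i (g i)) = Finsupp.equivFunOnFinite.symm g :=
    Finsupp.univ_sum_single (Finsupp.equivFunOnFinite.symm g)
  rw [h]

lemma aux_symm_apply (g : Fin n → ℕ) (a : Fin n) :
    (Finsupp.equivFunOnFinite.symm g) a = g a := rfl

lemma aux_base1 {i j : Fin n} {f : MvPolynomial (Fin n) k}
    (hf : f ∈ Ideal.span {X i, X j}) :
    ∀ d ∈ f.support, 1 ≤ d i + d j := by
  have h : ({X i, X j} : Set (MvPolynomial (Fin n) k)) = X '' {i, j} := by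
    simp [Set.image_insert_eq]
  rw [h, mem_ideal_span_X_image] at hf
  intro d hd
  obtain ⟨l, hl, hne⟩ := hf d hd
  rcases hl with rfl | hl
  · omega
  · simp only [Set.mem_singleton_iff] at hl; subst hl; omega

lemma aux_pow_support {i j : Fin n} (t : ℕ) {f : MvPolynomial (Fin n) k}
    (hf : f ∈ (Ideal.span {X i, X j} : Ideal (MvPolynomial (Fin n) k)) ^ t) :
    ∀ d ∈ f.support, t ≤ d i + d j := by
  classical
  induction t generalizing f with
  | zero => intro d hd; omega
  | succ t ih =>
    rw [pow_succ] at hf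
    refine Submodule.mul_induction_on hf (fun p hp q hq => ?_) (fun x y hx hy => ?_)
    · intro d hd
      have hd' := MvPolynomial.support_mul p q hd
      rw [Finset.mem_add] at hd'
      obtain ⟨d1, hd1, d2, hd2, rfl⟩ := hd'
      have h1 := ih hp d1 hd1
      have h2 := aux_base1 hq d2 hd2
      simp only [Finsupp.add_apply]
      omega
    · intro d hd
      rcases Finset.mem_union.mp (MvPolynomial.support_add hd) with h | h
      · exact hx d h
      · exact hy d h

lemma aux_mem_pow {i j : Fin n} (hij : i ≠ j) {t : ℕ} (e : Fin n →₀ ℕ)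
    (ht : t ≤ e i + e j) :
    monomial e (1 : k) ∈ (Ideal.span {X i, X j} : Ideal (MvPolynomial (Fin n) k)) ^ t := by
  classical
  set u : Fin n →₀ ℕ := Finsupp.single i (e i) + Finsupp.single j (e j) with hu
  have hle : u ≤ e := by
    rw [Finsupp.le_def]
    intro a
    simp only [hu, Finsupp.add_apply, Finsupp.single_apply]
    split_ifs with h1 h2 h3
    · exact absurd (h1.trans h2.symm) hij
    · subst h1; omega
    · subst h3; omega
    · omega
  have he : monomial e (1:k) = monomial (e - u) 1 * (X i ^ (e i) * X j ^ (e j)) := by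
    rw [X_pow_eq_monomial, X_pow_eq_monomial, monomial_mul, monomial_mul, mul_one, mul_one,
      ← add_assoc]
    rw [show e - u + Finsupp.single i (e i) + Finsupp.single j (e j) = e - u + u by
      rw [hu, add_assoc]]
    rw [tsub_add_cancel_of_le hle]
  rw [he]
  refine Ideal.mul_mem_left _ _ ?_
  refine Ideal.pow_le_pow_right ht ?_
  rw [pow_add]
  exact Ideal.mul_mem_mul (Ideal.pow_mem_pow (Ideal.subset_span (by simp)) _)
    (Ideal.pow_mem_pow (Ideal.subset_span (by simp)) _)

/-- divisibility step: if `e ≤ d` then `monomial d 1` is a multiple of `monomial e 1`. -/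
lemma aux_dvd_mem {e d : Fin n →₀ ℕ} (hle : e ≤ d) {I : Ideal (MvPolynomial (Fin n) k)}
    (hI : monomial e (1:k) ∈ I) : monomial d (1:k) ∈ I := by
  have : monomial d (1:k) = monomial (d - e) 1 * monomial e 1 := by
    rw [monomial_mul, mul_one, tsub_add_cancel_of_le hle]
  rw [this]
  exact Ideal.mul_mem_left _ _ hI

end aux

/-- For `n ≥ 3` and even `t = 2m` with `m ≥ 1`, the ideal
`K_n^(t) = ⋂_{i<j} ⟨x_i, x_j⟩^t` of `k[x_1,…,x_n]` equals the ideal generated by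
`∏_i x_i^m` together with the monomials `x_j^{m-k} ∏_{i≠j} x_i^{m+k}`
for `1 ≤ k ≤ m` and `j ∈ {1,…,n}`. -/
theorem complete_graph_even_power_generators (k : Type*) [Field k] (n m : ℕ)
    (hn : 3 ≤ n) (hm : 1 ≤ m) :
    (⨅ (i : Fin n) (j : Fin n) (_ : i < j),
        (Ideal.span {X i, X j} : Ideal (MvPolynomial (Fin n) k)) ^ (2 * m)) =
    Ideal.span ({∏ i, X i ^ m} ∪
      {f : MvPolynomial (Fin n) k |
        ∃ (c : ℕ) (j : Fin n), 1 ≤ c ∧ c ≤ m ∧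
          f = X j ^ (m - c) * ∏ i ∈ Finset.univ.erase j, X i ^ (m + c)}) := by
  classical
  have hn0 : 0 < n := by omega
  haveI : NeZero n := ⟨by omega⟩
  apply le_antisymm
  · -- hard direction: intersection ⊆ span of generators
    intro f hf
    simp only [Submodule.mem_iInf] at hf
    have hpair : ∀ d ∈ f.support, ∀ i j : Fin n, i ≠ j → 2 * m ≤ d i + d j := by
      intro d hd i j hij
      rcases lt_or_gt_of_ne hij with h | h
      · exact aux_pow_support _ (hf i j h) d hd
      · have := aux_pow_support _ (hf j i h) d hd; omega
    nth_rewrite 1 [f.as_sum]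
    apply Ideal.sum_mem
    intro d hd
    have key : monomial d (1:k) ∈ Ideal.span ({∏ i, X i ^ m} ∪
        {f : MvPolynomial (Fin n) k |
          ∃ (c : ℕ) (j : Fin n), 1 ≤ c ∧ c ≤ m ∧
            f = X j ^ (m - c) * ∏ i ∈ Finset.univ.erase j, X i ^ (m + c)}) := by
      obtain ⟨j0, -, hj0⟩ := Finset.exists_min_image Finset.univ d Finset.univ_nonempty
      rcases le_or_gt m (d j0) with hcase | hcase
      · -- all exponents ≥ m : use ∏ X i ^ m
        refine aux_dvd_mem (e := Finsupp.equivFunOnFinite.symm fun _ => m) ?_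
          (Ideal.subset_span (Or.inl ?_))
        · rw [Finsupp.le_def]
          intro a
          rw [aux_symm_apply]
          exact hcase.trans (hj0 a (Finset.mem_univ a))
        · exact (Set.mem_singleton_iff).mpr (aux_prod_X_pow _).symm
      · -- minimum < m : use the generator with j = j0, c = m - d j0
        set c : ℕ := m - d j0 with hc
        have hc1 : 1 ≤ c := by omega
        have hc2 : c ≤ m := by omega
        set g : Fin n → ℕ := fun i => if i = j0 then m - c else m + c with hg
        refine aux_dvd_mem (e := Finsupp.equivFunOnFinite.symm g) ?_
          (Ideal.subset_span (Or.inr ⟨c, j0, hc1, hc2, ?_⟩))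
        · rw [Finsupp.le_def]
          intro a
          rw [aux_symm_apply]
          simp only [hg]
          split_ifs with h1
          · subst h1; omega
          · have := hpair d hd a j0 h1
            omega
        · rw [← aux_prod_X_pow]
          rw [← Finset.mul_prod_erase Finset.univ _ (Finset.mem_univ j0)]
          congr 1
          · simp [hg]
          · exact Finset.prod_congr rfl fun i hi => by
              simp [hg, Finset.ne_of_mem_erase hi]
    rw [show monomial d (coeff d f) = C (coeff d f) * monomial d 1 by
      rw [C_mul_monomial, mul_one]]
    exact Ideal.mul_mem_left _ _ key
  · rw [Ideal.span_le]
    rintro g hg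
    simp only [Submodule.mem_iInf, SetLike.mem_coe]
    intro i j hij
    rcases hg with hg | ⟨c, j0, hc1, hc2, rfl⟩
    · rw [Set.mem_singleton_iff] at hg
      subst hg
      rw [aux_prod_X_pow]
      refine aux_mem_pow (ne_of_lt hij) _ ?_
      rw [aux_symm_apply, aux_symm_apply]
      omega
    · set g : Fin n → ℕ := fun i => if i = j0 then m - c else m + c with hgdef
      have hrw : X j0 ^ (m - c) * ∏ i ∈ Finset.univ.erase j0, X i ^ (m + c) =
          monomial (Finsupp.equivFunOnFinite.symm g) (1:k) := by
        rw [← aux_prod_X_pow]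
        rw [← Finset.mul_prod_erase Finset.univ _ (Finset.mem_univ j0)]
        congr 1
        · simp [hgdef]
        · exact Finset.prod_congr rfl fun i hi => by
            simp [hgdef, Finset.ne_of_mem_erase hi]
      rw [hrw]
      refine aux_mem_pow (ne_of_lt hij) _ ?_
      rw [aux_symm_apply, aux_symm_apply]
      simp only [hgdef]
      split_ifs with h1 h2 h3
      · exact absurd (h1.trans h2.symm) (ne_of_lt hij)
      · omega
      · omega
      · omega
end

section
/- Let k be a field, n ≥ 3, and t = 2m+1 odd with m ∈ ℕ. For 0 ≤ k ≤ m and 1 ≤ j ≤ n set g_{k,j} = x_j^{m-k} ∏_{i≠j} x_i^{m+1+k} in k[x_1,…,x_n], and order the pairs (k,j) lexicographically (first by k, then by j). Then for every pair (k,j) ≠ (0,1), the colon ideal ⟨ g_{k',j'} : (k',j') < (k,j) ⟩ : g_{k,j} is generated by a subset of the variables {x_1,…,x_n}. -/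
/-!
Every earlier generator is divisible by `x_j ^ (m - c + 1)`: for `j' = j` because `c' < c`, and
otherwise because `x_j` occurs in it with exponent `m + 1 + c'`. Since `g_{c,j}` contains `x_j`
exactly `m - c` times, primality of `x_j` forces every element of the colon ideal into `(x_j)`.
Conversely `x_j g_{c,j}` is the multiple `(∏_{i ≠ j} x_i) g_{c-1,j}` when `c > 0`, and equals
`∏_i x_i ^ (m+1) = x_{j₀} g_{0,j₀}` for any `j₀ < j` when `c = 0`.
-/

open MvPolynomial Finset

namespace MvPolynomial

variable {σ R : Type*} [CommRing R] [IsDomain R] [DecidableEq σ]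

theorem X_dvd_of_X_dvd_mul_prod_erase {s : Finset σ} {i : σ} {e : ℕ} {r : MvPolynomial σ R}
    (h : X i ∣ r * ∏ l ∈ s.erase i, X l ^ e) : X i ∣ r := by
  refine (X_prime.dvd_or_dvd h).resolve_right fun hprod => ?_
  obtain ⟨l, hl, hdvd⟩ := (X_prime.dvd_finsetProd_iff _).1 hprod
  exact ne_of_mem_erase hl (X_dvd_X.1 (X_prime.dvd_of_dvd_pow hdvd)).symm

theorem X_dvd_of_X_pow_succ_dvd_mul {s : Finset σ} {i : σ} {a e : ℕ} {r : MvPolynomial σ R}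
    (h : X i ^ (a + 1) ∣ r * (X i ^ a * ∏ l ∈ s.erase i, X l ^ e)) : X i ∣ r := by
  rw [mul_left_comm, pow_succ] at h
  exact X_dvd_of_X_dvd_mul_prod_erase ((mul_dvd_mul_iff_left (pow_ne_zero a (X_ne_zero i))).1 h)

end MvPolynomial

section Generators

variable {σ R : Type*} [CommSemiring R] [Fintype σ] [DecidableEq σ]

variable (R) in
/-- The generator `g_{k,j}` of the statement, with `k` renamed `c`. -/
noncomputable def oddGen (m c : ℕ) (j : σ) : MvPolynomial σ R :=
  X j ^ (m - c) * ∏ i ∈ univ.erase j, X i ^ (m + 1 + c)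

theorem X_pow_dvd_oddGen {m c c' : ℕ} {j j' : σ} (hc : c ≤ m) (h : c' < c ∨ j' ≠ j) :
    (X j : MvPolynomial σ R) ^ (m - c + 1) ∣ oddGen R m c' j' := by
  by_cases hj : j' = j
  · subst hj
    have hc' : c' < c := h.resolve_right (not_not.2 rfl)
    exact (pow_dvd_pow _ (by omega)).mul_right _
  · refine dvd_mul_of_dvd_right ((pow_dvd_pow _ (by omega : m - c + 1 ≤ m + 1 + c')).trans ?_) _
    exact dvd_prod_of_mem _ (mem_erase.2 ⟨Ne.symm hj, mem_univ _⟩)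

theorem X_mul_oddGen_zero (m : ℕ) (j : σ) :
    X j * oddGen R m 0 j = ∏ i, X i ^ (m + 1) := by
  rw [oddGen, ← mul_assoc, Nat.sub_zero, ← pow_succ', Nat.add_zero]
  exact mul_prod_erase univ (fun i => (X i : MvPolynomial σ R) ^ (m + 1)) (mem_univ j)

theorem X_mul_oddGen_succ {m c : ℕ} (hc : c + 1 ≤ m) (j : σ) :
    X j * oddGen R m (c + 1) j = (∏ i ∈ univ.erase j, X i) * oddGen R m c j := by
  rw [oddGen, oddGen, show m - c = m - (c + 1) + 1 by omega,
    show m + 1 + (c + 1) = m + 1 + c + 1 by omega]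
  simp only [pow_succ, prod_mul_distrib]
  ring

end Generators

section Colon

variable {σ R : Type*} [Fintype σ] [DecidableEq σ] [Preorder σ] {m c : ℕ} {j : σ}

section CommSemiring

variable [CommSemiring R]

variable (R) in
def precedingOddGens (m c : ℕ) (j : σ) : Set (MvPolynomial σ R) :=
  {g | ∃ (c' : ℕ) (j' : σ), c' ≤ m ∧ (c' < c ∨ (c' = c ∧ j' < j)) ∧ g = oddGen R m c' j'}

theorem span_precedingOddGens_le (hc : c ≤ m) :
    Ideal.span (precedingOddGens R m c j) ≤ Ideal.span {X j ^ (m - c + 1)} := by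
  rw [Ideal.span_le]
  rintro _ ⟨c', j', -, hlt, rfl⟩
  refine Ideal.mem_span_singleton.2 (X_pow_dvd_oddGen hc ?_)
  rcases hlt with h | ⟨rfl, h⟩
  · exact Or.inl h
  · exact Or.inr (ne_of_lt h)

theorem X_mem_colon_precedingOddGens (hc : c ≤ m) (hfirst : c ≠ 0 ∨ ∃ j₀, j₀ < j) :
    X j ∈ (Ideal.span (precedingOddGens R m c j)).colon (Ideal.span {oddGen R m c j}) := by
  rw [Ideal.mem_colon_span_singleton]
  rcases c with _ | c
  · obtain ⟨j₀, hj₀⟩ := hfirst.resolve_left (not_not.2 rfl)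
    rw [X_mul_oddGen_zero, ← X_mul_oddGen_zero m j₀]
    exact Ideal.mul_mem_left _ _ (Ideal.subset_span ⟨0, j₀, Nat.zero_le _, Or.inr ⟨rfl, hj₀⟩, rfl⟩)
  · rw [X_mul_oddGen_succ hc]
    exact Ideal.mul_mem_left _ _ (Ideal.subset_span ⟨c, j, by omega, Or.inl c.lt_succ_self, rfl⟩)

end CommSemiring

section Domain

variable [CommRing R] [IsDomain R]

theorem colon_precedingOddGens_le (hc : c ≤ m) :
    (Ideal.span (precedingOddGens R m c j)).colon (Ideal.span {oddGen R m c j}) ≤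
      Ideal.span {X j} := by
  intro r hr
  rw [Ideal.mem_colon_span_singleton] at hr
  exact Ideal.mem_span_singleton.2 (X_dvd_of_X_pow_succ_dvd_mul
    (Ideal.mem_span_singleton.1 (span_precedingOddGens_le hc hr)))

theorem colon_precedingOddGens_eq (hc : c ≤ m) (hfirst : c ≠ 0 ∨ ∃ j₀, j₀ < j) :
    (Ideal.span (precedingOddGens R m c j)).colon (Ideal.span {oddGen R m c j}) =
      Ideal.span {X j} :=
  le_antisymm (colon_precedingOddGens_le hc) <|
    (Ideal.span_singleton_le_iff_mem _).2 (X_mem_colon_precedingOddGens hc hfirst)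

end Domain

end Colon

/-- For `n ≥ 3` and odd `t = 2m+1`, with generators
`g_{k,j} = x_j^{m-k} ∏_{i≠j} x_i^{m+1+k}` ordered lexicographically in `(k,j)`,
every colon ideal `⟨g_{k',j'} : (k',j') < (k,j)⟩ : g_{k,j}` (for `(k,j)` not the
first pair) is generated by a subset of the variables. -/
theorem complete_graph_odd_linear_quotients_colon (k : Type*) [Field k] (n m : ℕ)
    (hn : 3 ≤ n) (c : ℕ) (j : Fin n) (hc : c ≤ m) (hfirst : ¬(c = 0 ∧ j = ⟨0, by omega⟩)) :
    ∃ S : Set (Fin n),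
      Submodule.colon
          (Ideal.span {g : MvPolynomial (Fin n) k |
            ∃ (c' : ℕ) (j' : Fin n), c' ≤ m ∧ (c' < c ∨ (c' = c ∧ j' < j)) ∧
              g = X j' ^ (m - c') * ∏ i ∈ Finset.univ.erase j', X i ^ (m + 1 + c')})
          ((Ideal.span {X j ^ (m - c) * ∏ i ∈ Finset.univ.erase j, X i ^ (m + 1 + c)} :
            Ideal (MvPolynomial (Fin n) k)) : Set (MvPolynomial (Fin n) k)) =
      Ideal.span (X '' S) := by
  have hpred : c ≠ 0 ∨ ∃ j₀, j₀ < j := by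
    by_cases hc0 : c = 0
    · refine Or.inr ⟨⟨0, by omega⟩, Fin.lt_def.2 (Nat.pos_of_ne_zero fun h => ?_)⟩
      exact hfirst ⟨hc0, Fin.ext h⟩
    · exact Or.inl hc0
  refine ⟨{j}, ?_⟩
  rw [Set.image_singleton]
  exact colon_precedingOddGens_eq hc hpred
end

section
/- Let n ≥ 3 and t = 2m+1 odd with m ∈ ℕ. For 0 ≤ k ≤ m and 1 ≤ j ≤ n let g_{k,j} = x_j^{m-k} ∏_{i≠j} x_i^{m+1+k}, viewed as a monomial in k[x_1,…,x_n] over a field k. Then these monomials form an antichain under divisibility: for (k,j) ≠ (k',j'), the monomial g_{k,j} does not divide g_{k',j'}. Consequently they form a minimal monomial generating set of the ideal they generate. -/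
open MvPolynomial

/-- The monomial `g_{k,j} = x_j^{m-k} ∏_{i≠j} x_i^{m+1+k}` in `k[x_1,…,x_n]`. -/
noncomputable def gOdd (k : Type*) [Field k] (n m : ℕ) (c : ℕ) (j : Fin n) :
    MvPolynomial (Fin n) k :=
  X j ^ (m - c) * ∏ i ∈ Finset.univ.erase j, X i ^ (m + 1 + c)

/-- The exponent vector of `gOdd`. -/
noncomputable def eOdd (n m c : ℕ) (j : Fin n) : Fin n →₀ ℕ :=
  Finsupp.equivFunOnFinite.symm (fun i => if i = j then m - c else m + 1 + c)

lemma eOdd_apply (n m c : ℕ) (j i : Fin n) :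
    eOdd n m c j i = if i = j then m - c else m + 1 + c := rfl

lemma gOdd_eq (k : Type*) [Field k] (n m c : ℕ) (j : Fin n) :
    gOdd k n m c j = monomial (eOdd n m c j) (1 : k) := by
  rw [monomial_eq, C_1, one_mul,
    Finsupp.prod_fintype _ _ (fun i => pow_zero _),
    ← Finset.mul_prod_erase Finset.univ _ (Finset.mem_univ j), gOdd]
  congr 1
  · rw [eOdd_apply, if_pos rfl]
  · exact Finset.prod_congr rfl fun i hi => by
      rw [eOdd_apply, if_neg (Finset.ne_of_mem_erase hi)]

lemma eOdd_not_le (n m : ℕ) (hn : 3 ≤ n) (c c' : ℕ) (j j' : Fin n)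
    (hc : c ≤ m) (hc' : c' ≤ m) (hne : (c, j) ≠ (c', j')) :
    ¬ eOdd n m c j ≤ eOdd n m c' j' := by
  intro hle
  by_cases hjj : j = j'
  · subst hjj
    have hcc : c ≠ c' := by simpa [Prod.ext_iff] using hne
    obtain ⟨i, hi⟩ : ∃ i : Fin n, i ≠ j := by
      apply Fintype.exists_ne_of_one_lt_card
      simp only [Fintype.card_fin]; omega
    have h1 := Finsupp.le_def.mp hle i
    have h2 := Finsupp.le_def.mp hle j
    rw [eOdd_apply, eOdd_apply, if_neg hi, if_neg hi] at h1
    rw [eOdd_apply, eOdd_apply, if_pos rfl, if_pos rfl] at h2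
    omega
  · have h := Finsupp.le_def.mp hle j'
    simp only [eOdd_apply, if_neg (Ne.symm hjj)] at h
    simp only [if_true] at h
    omega

/-- For `n ≥ 3` and odd `t = 2m+1`, the monomials
`g_{k,j} = x_j^{m-k} ∏_{i≠j} x_i^{m+1+k}` (`0 ≤ k ≤ m`, `1 ≤ j ≤ n`) form an antichain
under divisibility, and consequently a minimal generating set of the ideal they
generate: no `g_{k,j}` lies in the ideal generated by the others. -/
theorem complete_graph_odd_generators_minimal (k : Type*) [Field k] (n m : ℕ) (hn : 3 ≤ n) :
    (∀ (c c' : ℕ) (j j' : Fin n), c ≤ m → c' ≤ m → (c, j) ≠ (c', j') →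
      ¬ (gOdd k n m c j ∣ gOdd k n m c' j')) ∧
    (∀ (c : ℕ) (j : Fin n), c ≤ m →
      gOdd k n m c j ∉
        Ideal.span {f : MvPolynomial (Fin n) k |
          ∃ (c' : ℕ) (j' : Fin n), c' ≤ m ∧ (c', j') ≠ (c, j) ∧ f = gOdd k n m c' j'}) := by
  constructor
  · intro c c' j j' hc hc' hne hdvd
    rw [gOdd_eq, gOdd_eq, monomial_dvd_monomial] at hdvd
    rcases hdvd.1 with h | h
    · exact one_ne_zero h
    · exact eOdd_not_le n m hn c c' j j' hc hc' hne h
  · intro c j hc hmem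
    have hset : {f : MvPolynomial (Fin n) k |
          ∃ (c' : ℕ) (j' : Fin n), c' ≤ m ∧ (c', j') ≠ (c, j) ∧ f = gOdd k n m c' j'}
        = (fun d => monomial d (1 : k)) ''
          {d | ∃ (c' : ℕ) (j' : Fin n), c' ≤ m ∧ (c', j') ≠ (c, j) ∧ d = eOdd n m c' j'} := by
      ext f
      constructor
      · rintro ⟨c', j', h1, h2, rfl⟩
        exact ⟨eOdd n m c' j', ⟨c', j', h1, h2, rfl⟩, (gOdd_eq k n m c' j').symm⟩
      · rintro ⟨d, ⟨c', j', h1, h2, rfl⟩, rfl⟩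
        exact ⟨c', j', h1, h2, (gOdd_eq k n m c' j').symm⟩
    rw [hset, gOdd_eq, mem_ideal_span_monomial_image] at hmem
    have hsupp : eOdd n m c j ∈ (monomial (eOdd n m c j) (1 : k)).support := by
      classical
      rw [support_monomial, if_neg (one_ne_zero)]
      exact Finset.mem_singleton_self _
    obtain ⟨d, ⟨c', j', h1, h2, rfl⟩, hle⟩ := hmem _ hsupp
    exact eOdd_not_le n m hn c' c j' j h1 hc h2 hle
end
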